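/- arXiv:2301.07537 — 3 statements merged into one kernel-verified Lean document; each statement's English description precedes it below -/
import Mathlib

section
/- Let T be an undirected tree on t ≥ 2 vertices with positive vertex weights w, such that every edge {a,b} of T satisfies min(w_a,w_b) ≥ (1−ε)·max(w_a,w_b) for some 0 ≤ ε ≤ 1/2. Then, orienting each edge {a,b} with w_a ≤ w_b as (a,b), we have Σ_{(a,b)∈E(T)} w_a ≥ ((t−1)(1−ε)/(t−ε)) · Σ_{v∈V(T)} w_v. -/
/-!
Root the tree at a vertex `r` of minimum weight. Sending every other vertex `v` to the edge
towards its parent is a bijection onto the edges, so the left-hand side is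
`S = ∑_{v ≠ r} min (w v) (w (parent v))`. Each term is at least `w r`, and by the edge condition
at least `(1 - ε) w v`; hence `S ≥ (t - 1) w r` and `S ≥ (1 - ε) (W - w r)` with `W = ∑ w`.
Adding `1 - ε` times the first bound to `t - 1` times the second eliminates `w r`.
-/

open Finset

namespace SimpleGraph

variable {V : Type*} {G : SimpleGraph V}

theorem Reachable.exists_adj_dist_eq_succ {u v : V} (h : G.Reachable u v) (hne : u ≠ v) :
    ∃ x, G.Adj u x ∧ G.dist u v = G.dist x v + 1 := by
  obtain ⟨p, hp⟩ := h.exists_walk_length_eq_dist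
  cases p with
  | nil => exact absurd rfl hne
  | cons hadj q =>
    refine ⟨_, hadj, le_antisymm ?_ ?_⟩
    · have hx : G.Reachable _ v := q.reachable
      simpa [dist_eq_one_iff_adj.mpr hadj, add_comm] using hx.dist_triangle_right u
    · simpa [← hp] using dist_le q

theorem Connected.exists_parent (hG : G.Connected) (r : V) :
    ∃ p : V → V, ∀ v ≠ r, G.Adj v (p v) ∧ G.dist v r = G.dist (p v) r + 1 := by
  classical
  choose p hp using fun v (hv : v ≠ r) => (hG v r).exists_adj_dist_eq_succ hv
  exact ⟨fun v => if hv : v ≠ r then p v hv else v, fun v hv => by simpa [hv] using hp v hv⟩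

theorem IsTree.exists_parent_sum_edgeFinset [Fintype V] [DecidableEq V] [DecidableRel G.Adj]
    (hG : G.IsTree) (r : V) {M : Type*} [AddCommMonoid M] (f : Sym2 V → M) :
    ∃ p : V → V, (∀ v ≠ r, G.Adj v (p v)) ∧
      ∑ e ∈ G.edgeFinset, f e = ∑ v ∈ univ.erase r, f s(v, p v) := by
  obtain ⟨p, hp⟩ := hG.connected.exists_parent r
  have hinj : Set.InjOn (fun v => s(v, p v)) (univ.erase r) := by
    intro u hu v hv huv
    have hu := (hp u (ne_of_mem_erase hu)).2
    have hv := (hp v (ne_of_mem_erase hv)).2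
    rcases Sym2.eq_iff.mp huv with ⟨h, -⟩ | ⟨hpu, hpv⟩
    · exact h
    · -- `p u = v` and `p v = u` would each be strictly closer to `r` than the other
      rw [← hpu] at hv
      rw [hpv] at hu
      omega
  have himage : (univ.erase r).image (fun v => s(v, p v)) = G.edgeFinset := by
    refine eq_of_subset_of_card_le ?_ ?_
    · simp only [subset_iff, mem_image, mem_erase, mem_univ, and_true, mem_edgeFinset]
      rintro _ ⟨v, hv, rfl⟩
      exact (hp v hv).1
    · rw [card_image_of_injOn hinj, card_erase_of_mem (mem_univ r), card_univ,
        ← hG.card_edgeFinset, Nat.add_sub_cancel]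
  exact ⟨p, fun v hv => (hp v hv).1, by rw [← himage, sum_image hinj]⟩

end SimpleGraph

theorem stmt_3_general {V : Type*} [Fintype V] [DecidableEq V]
    (G : SimpleGraph V) [DecidableRel G.Adj]
    (hconn : G.Connected) (hacyc : G.IsAcyclic)
    (t : ℕ) (ht : Fintype.card V = t) (ht2 : 2 ≤ t)
    (w : V → ℝ)
    (ε : ℝ) (hε1 : ε ≤ 1 / 2)
    (hedge : ∀ a b, G.Adj a b → (1 - ε) * max (w a) (w b) ≤ min (w a) (w b)) :
    ∑ e ∈ G.edgeFinset,
        Sym2.lift ⟨fun a b => min (w a) (w b), fun a b => min_comm _ _⟩ e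
      ≥ (((t : ℝ) - 1) * (1 - ε) / ((t : ℝ) - ε)) * ∑ v, w v := by
  have : Nonempty V := Fintype.card_pos_iff.mp (by omega)
  obtain ⟨r, -, hr⟩ := exists_min_image univ w univ_nonempty
  obtain ⟨p, hp, hsum⟩ := SimpleGraph.IsTree.exists_parent_sum_edgeFinset ⟨hconn, hacyc⟩ r
    (Sym2.lift ⟨fun a b => min (w a) (w b), fun a b => min_comm _ _⟩)
  simp only [Sym2.lift_mk] at hsum
  set S := ∑ v ∈ univ.erase r, min (w v) (w (p v))
  have hcard : ((univ.erase r).card : ℝ) = t - 1 := by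
    rw [card_erase_of_mem (mem_univ r), card_univ, ht, Nat.cast_sub (by omega), Nat.cast_one]
  have hmin : ((t : ℝ) - 1) * w r ≤ S := by
    rw [← hcard, ← nsmul_eq_mul]
    exact card_nsmul_le_sum _ _ _ fun v _ => le_min (hr v (mem_univ v)) (hr _ (mem_univ _))
  have hedges : (1 - ε) * (∑ v, w v - w r) ≤ S := by
    rw [← sum_erase_eq_sub (mem_univ r), mul_sum]
    refine sum_le_sum fun v hv => ?_
    calc (1 - ε) * w v ≤ (1 - ε) * max (w v) (w (p v)) :=
          mul_le_mul_of_nonneg_left (le_max_left _ _) (by linarith)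
      _ ≤ min (w v) (w (p v)) := hedge v (p v) (hp v (ne_of_mem_erase hv))
  have ht2' : (2 : ℝ) ≤ t := by exact_mod_cast ht2
  rw [hsum, ge_iff_le, div_mul_eq_mul_div, div_le_iff₀ (by linarith)]
  linarith [mul_le_mul_of_nonneg_left hmin (by linarith : (0 : ℝ) ≤ 1 - ε),
    mul_le_mul_of_nonneg_left hedges (by linarith : (0 : ℝ) ≤ (t : ℝ) - 1)]

theorem stmt_3 {V : Type*} [Fintype V] [DecidableEq V]
    (G : SimpleGraph V) [DecidableRel G.Adj]
    (hconn : G.Connected) (hacyc : G.IsAcyclic)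
    (t : ℕ) (ht : Fintype.card V = t) (ht2 : 2 ≤ t)
    (w : V → ℝ) (hw : ∀ v, 0 < w v)
    (ε : ℝ) (hε0 : 0 ≤ ε) (hε1 : ε ≤ 1 / 2)
    (hedge : ∀ a b, G.Adj a b → (1 - ε) * max (w a) (w b) ≤ min (w a) (w b)) :
    ∑ e ∈ G.edgeFinset,
        Sym2.lift ⟨fun a b => min (w a) (w b), fun a b => min_comm _ _⟩ e
      ≥ (((t : ℝ) - 1) * (1 - ε) / ((t : ℝ) - ε)) * ∑ v, w v :=
  stmt_3_general G hconn hacyc t ht ht2 w ε hε1 hedge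
end

section
/- Let 0 ≤ δ ≤ ε < 1, let n ≥ 1 be an integer, and let α_1,…,α_n and β be real numbers with β ≥ (Σ_{i=1}^n α_i² − 1)/(1−ε). Then Σ_{i=1}^n (1−α_i)² + (ε−δ)β ≥ n(ε−δ)/(1−δ) − (ε−δ)/(1−ε). -/
/-!
With `t = (ε - δ) / (1 - ε)` the hypothesis on `β` gives `(ε - δ) β ≥ t (∑ αᵢ² - 1)`, so it
suffices to bound `∑ ((1 - αᵢ)² + t αᵢ²)` from below. Each summand is a quadratic in `αᵢ` with
minimum `t / (1 + t) = (ε - δ) / (1 - δ)`.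
-/

open Finset

lemma div_one_add_le_one_sub_sq_add_mul_sq {t : ℝ} (ht : 0 ≤ t) (x : ℝ) :
    t / (1 + t) ≤ (1 - x) ^ 2 + t * x ^ 2 := by
  rw [div_le_iff₀ (by linarith)]
  -- `(1 + t) ((1 - x)² + t x²) - t = ((1 + t) x - 1)²`
  nlinarith [sq_nonneg ((1 + t) * x - 1)]

lemma card_mul_div_one_add_le_sum_one_sub_sq_add_mul_sum_sq {ι : Type*} {t : ℝ} (ht : 0 ≤ t)
    (s : Finset ι) (f : ι → ℝ) :
    #s * (t / (1 + t)) ≤ ∑ i ∈ s, (1 - f i) ^ 2 + t * ∑ i ∈ s, f i ^ 2 := by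
  rw [mul_sum, ← sum_add_distrib]
  simpa using sum_le_sum fun i _ => div_one_add_le_one_sub_sq_add_mul_sq ht (f i)

theorem stmt_7_general (ε δ : ℝ) (hδε : δ ≤ ε) (hε1 : ε < 1)
    (n : ℕ) (α : Fin n → ℝ) (β : ℝ)
    (hβ : β ≥ ((∑ i, (α i) ^ 2) - 1) / (1 - ε)) :
    ∑ i, (1 - α i) ^ 2 + (ε - δ) * β
      ≥ (n : ℝ) * (ε - δ) / (1 - δ) - (ε - δ) / (1 - ε) := by
  set t := (ε - δ) / (1 - ε)
  have ht : 0 ≤ t := div_nonneg (by linarith) (by linarith)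
  have ht_div : t / (1 + t) = (ε - δ) / (1 - δ) := by
    have : 1 - ε ≠ 0 := by linarith
    rw [div_eq_div_iff (by linarith) (by linarith)]
    simp only [t]
    field_simp
    ring
  have hβ' : t * (∑ i, α i ^ 2 - 1) ≤ (ε - δ) * β := by
    rw [div_mul_eq_mul_div, mul_div_assoc]
    exact mul_le_mul_of_nonneg_left hβ (by linarith)
  have hsum := card_mul_div_one_add_le_sum_one_sub_sq_add_mul_sum_sq ht univ α
  rw [card_univ, Fintype.card_fin, ht_div] at hsum
  rw [mul_div_assoc]
  linarith

theorem stmt_7 (ε δ : ℝ) (hδ0 : 0 ≤ δ) (hδε : δ ≤ ε) (hε1 : ε < 1)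
    (n : ℕ) (hn : 1 ≤ n) (α : Fin n → ℝ) (β : ℝ)
    (hβ : β ≥ ((∑ i, (α i) ^ 2) - 1) / (1 - ε)) :
    ∑ i, (1 - α i) ^ 2 + (ε - δ) * β
      ≥ (n : ℝ) * (ε - δ) / (1 - δ) - (ε - δ) / (1 - ε) :=
  stmt_7_general ε δ hδε hε1 n α β hβ
end

section
/- The limit as k → ∞ of max over ε ∈ [0,1/2] of min{ (1−ε)/(2−ε), (k − 1/√(1−ε))·(1 − √(1−ε)) } equals 1/2. -/
/-!
The first term of the minimum is at most `1/2` on `[0, 1/2]`, which bounds every supremum.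
Conversely, at `ε = 1 - (1 - 1/k)²` (the choice making `√(1 - ε) = 1 - 1/k`) the second term
equals `1 - 1/(k - 1) → 1`, while `ε → 0` sends the first term to `1/2`.
-/

open Filter Topology Set

noncomputable def objective (k ε : ℝ) : ℝ :=
  min ((1 - ε) / (2 - ε)) ((k - 1 / √(1 - ε)) * (1 - √(1 - ε)))

lemma objective_le_half (k : ℝ) {ε : ℝ} (hε₀ : 0 ≤ ε) (hε₂ : ε < 2) : objective k ε ≤ 1 / 2 := by
  refine (min_le_left _ _).trans ?_
  rw [div_le_iff₀ (by linarith)]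
  linarith

lemma objective_one_sub_sq (k : ℝ) (hk : 1 < k) :
    objective k (1 - (1 - k⁻¹) ^ 2) =
      min ((1 - k⁻¹) ^ 2 / (1 + (1 - k⁻¹) ^ 2)) (1 - (k - 1)⁻¹) := by
  have hs : √(1 - (1 - (1 - k⁻¹) ^ 2)) = 1 - k⁻¹ := by
    rw [sub_sub_cancel, Real.sqrt_sq (sub_nonneg.2 (inv_le_one_of_one_le₀ hk.le))]
  rw [objective, hs]
  have hk0 : k ≠ 0 := by positivity
  have hk1 : k - 1 ≠ 0 := sub_ne_zero.2 hk.ne'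
  congr 1
  · ring_nf
  · field_simp
    ring

lemma one_sub_sq_mem_Icc {k : ℝ} (hk : 4 ≤ k) : 1 - (1 - k⁻¹) ^ 2 ∈ Icc (0 : ℝ) (1 / 2) := by
  have h₁ : k⁻¹ ≤ 1 / 4 := by rw [one_div]; exact inv_anti₀ (by norm_num) hk
  have h₀ : 0 ≤ k⁻¹ := by positivity
  constructor <;> nlinarith

theorem stmt_16 :
    Filter.Tendsto
      (fun k : ℕ =>
        sSup ((fun ε : ℝ =>
          min ((1 - ε) / (2 - ε))
            (((k : ℝ) - 1 / Real.sqrt (1 - ε)) * (1 - Real.sqrt (1 - ε)))) ''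
          Set.Icc (0 : ℝ) (1 / 2)))
      Filter.atTop (nhds (1 / 2)) := by
  change Tendsto (fun k : ℕ => sSup (objective k '' Icc 0 (1 / 2))) atTop (𝓝 (1 / 2))
  have hub (k : ℕ) : ∀ x ∈ objective k '' Icc 0 (1 / 2), x ≤ 1 / 2 := by
    rintro _ ⟨ε, hε, rfl⟩
    exact objective_le_half k hε.1 (by linarith [hε.2])
  have hinv : Tendsto (fun k : ℕ => (k : ℝ)⁻¹) atTop (𝓝 0) := tendsto_inv_atTop_nhds_zero_nat
  have hinv' : Tendsto (fun k : ℕ => ((k : ℝ) - 1)⁻¹) atTop (𝓝 0) :=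
    (tendsto_atTop_add_const_right _ (-1) tendsto_natCast_atTop_atTop).inv_tendsto_atTop
  have hlow : Tendsto (fun k : ℕ => objective k (1 - (1 - (k : ℝ)⁻¹) ^ 2)) atTop (𝓝 (1 / 2)) := by
    have h : Tendsto (fun k : ℕ => min ((1 - (k : ℝ)⁻¹) ^ 2 / (1 + (1 - (k : ℝ)⁻¹) ^ 2))
        (1 - ((k : ℝ) - 1)⁻¹)) atTop (𝓝 (min ((1 - 0) ^ 2 / (1 + (1 - 0) ^ 2)) (1 - 0))) := by
      refine Tendsto.min ?_ (tendsto_const_nhds.sub hinv')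
      have hs := (tendsto_const_nhds (x := (1 : ℝ))).sub hinv |>.pow 2
      exact hs.div (tendsto_const_nhds.add hs) (by norm_num)
    norm_num at h
    refine h.congr' ?_
    filter_upwards [eventually_gt_atTop 1] with k hk
    rw [objective_one_sub_sq k (by exact_mod_cast hk)]
  refine tendsto_of_tendsto_of_tendsto_of_le_of_le' hlow tendsto_const_nhds ?_
    (Eventually.of_forall fun k => Real.sSup_le (hub k) (by norm_num))
  filter_upwards [eventually_ge_atTop 4] with k hk
  exact le_csSup ⟨1 / 2, hub k⟩ (mem_image_of_mem _ (one_sub_sq_mem_Icc (by exact_mod_cast hk)))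
end
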